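/- For the Hopf map π : S³ → S² with fiberwise S¹-invariant probability measures, the fiber-integration operator I_π maps P_t(S³) onto P_{⌊t/2⌋}(S²): I_π(P_t(S³)) = P_{⌊t/2⌋}(S²). -/

import Mathlib

open MeasureTheory Complex

noncomputable section

/-- The unit sphere `S³ = {(a,b) ∈ ℂ² : |a|²+|b|² = 1}`. -/
def S3 : Set (ℂ × ℂ) := {p | ‖p.1‖ ^ 2 + ‖p.2‖ ^ 2 = 1}

/-- The unit sphere `S² = {(ξ,η) ∈ ℝ×ℂ : ξ²+|η|² = 1}`. -/
def S2 : Set (ℝ × ℂ) := {p | p.1 ^ 2 + ‖p.2‖ ^ 2 = 1}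

/-- The unit circle `S¹ ⊂ ℂ`. -/
def S1 : Set ℂ := {z | ‖z‖ = 1}

/-- The Hopf map `π(a,b) = (|a|²−|b|², 2ab)`. -/
def hopf (p : ℂ × ℂ) : ℝ × ℂ :=
  (‖p.1‖ ^ 2 - ‖p.2‖ ^ 2, 2 * p.1 * p.2)

/-- The right `S¹`-action on `S³`: `(a,b)·z = (az, b z̄)`. -/
def act (p : ℂ × ℂ) (z : ℂ) : ℂ × ℂ := (p.1 * z, p.2 * starRingEnd ℂ z)

/-- Real coordinates on `ℂ² ≅ ℝ⁴`. -/
def coords4 (p : ℂ × ℂ) : Fin 4 → ℝ := ![p.1.re, p.1.im, p.2.re, p.2.im]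

/-- Real coordinates on `ℝ×ℂ ≅ ℝ³`. -/
def coords3 (p : ℝ × ℂ) : Fin 3 → ℝ := ![p.1, p.2.re, p.2.im]

/-- Real coordinates on `ℂ ≅ ℝ²`. -/
def coords2 (z : ℂ) : Fin 2 → ℝ := ![z.re, z.im]

/-- Evaluation of a complex polynomial in 4 real variables at a point of `ℂ²`. -/
def polyFun4 (p : MvPolynomial (Fin 4) ℂ) (x : ℂ × ℂ) : ℂ :=
  MvPolynomial.eval (fun i => ((coords4 x i : ℝ) : ℂ)) p

def polyFun3 (p : MvPolynomial (Fin 3) ℂ) (x : ℝ × ℂ) : ℂ :=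
  MvPolynomial.eval (fun i => ((coords3 x i : ℝ) : ℂ)) p

def polyFun2 (p : MvPolynomial (Fin 2) ℂ) (x : ℂ) : ℂ :=
  MvPolynomial.eval (fun i => ((coords2 x i : ℝ) : ℂ)) p

/-- The spherical measure on `S³ ⊂ ℂ²`, obtained from the spherical measure on the
unit sphere of `ℝ⁴` via the standard identification. -/
def μS3 : Measure (ℂ × ℂ) :=
  ((volume : Measure (EuclideanSpace ℝ (Fin 4))).toSphere).map
    (fun x => ((⟨x.1 0, x.1 1⟩, ⟨x.1 2, x.1 3⟩) : ℂ × ℂ))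

/-- The spherical measure on `S² ⊂ ℝ×ℂ`. -/
def μS2 : Measure (ℝ × ℂ) :=
  ((volume : Measure (EuclideanSpace ℝ (Fin 3))).toSphere).map
    (fun x => ((x.1 0, ⟨x.1 1, x.1 2⟩) : ℝ × ℂ))

/-- The arc-length measure on `S¹ ⊂ ℂ`. -/
def μS1 : Measure ℂ :=
  ((volume : Measure ℂ).toSphere).map (fun z => (z.1 : ℂ))

/-- `X` is a spherical `t`-design with respect to the measure `μ` (supported on a sphere),
where `c` gives the real coordinates: the average over `X` of every polynomial of total
degree at most `t` equals its average over the sphere. -/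
def IsDesign {V : Type} [MeasurableSpace V] {n : ℕ} (c : V → Fin n → ℝ) (μ : Measure V) (t : ℕ)
    (X : Finset V) : Prop :=
  X.Nonempty ∧ ∀ p : MvPolynomial (Fin n) ℂ, p.totalDegree ≤ t →
    (∑ x ∈ X, MvPolynomial.eval (fun i => ((c x i : ℝ) : ℂ)) p) / (X.card : ℂ) =
      ⨍ x, MvPolynomial.eval (fun i => ((c x i : ℝ) : ℂ)) p ∂μ

/-- The normalization of a measure to a probability measure. -/
def mnormalize {V : Type} [MeasurableSpace V] (μ : Measure V) : Measure V :=
  (μ Set.univ)⁻¹ • μ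

/-- The `S¹`-invariant probability measure on the fiber of the Hopf map through `s ∈ S³`,
realized as the pushforward of the normalized arc-length measure under `z ↦ s·z`. -/
def μfiber (s : ℂ × ℂ) : Measure (ℂ × ℂ) :=
  (mnormalize μS1).map (act s)

/-!
Write a point of `S³` as `(a, b)` and a polynomial in its real coordinates as a
polynomial of the same degree in `a, ā, b, b̄`. Along the fiber `z ↦ (a z, b z̄)` the
monomial `a^i ā^j b^k b̄^l` picks up the character `z^(i+l) z̄^(j+k)`, whose circle average
is `1` if `i + l = j + k` and `0` otherwise, so the fiber average keeps exactly the balanced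
monomials. A balanced monomial is a product of `a ā = (1 + ξ)/2`, `b b̄ = (1 - ξ)/2` and
either `a b = η/2` or `ā b̄ = η̄/2`, where `(ξ, η) = π(a, b)`, hence a polynomial of half its
degree in `(ξ, η)`. Conversely `q ∘ π` is a polynomial of degree `2 deg q` which is
constant on every fiber.
-/

open MvPolynomial Metric
open scoped ComplexConjugate Pointwise

namespace MvPolynomial

variable {R σ τ : Type*} [CommSemiring R]

theorem eval_bind₁ (f : τ → R) (g : σ → MvPolynomial τ R) (p : MvPolynomial σ R) :
    eval f (bind₁ g p) = eval (fun i => eval f (g i)) p :=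
  eval₂Hom_bind₁ _ _ _ _

theorem totalDegree_bind₁_le {g : σ → MvPolynomial τ R} {k : ℕ}
    (hg : ∀ i, (g i).totalDegree ≤ k) (p : MvPolynomial σ R) :
    (bind₁ g p).totalDegree ≤ k * p.totalDegree := by
  conv_lhs => rw [p.as_sum, map_sum]
  refine totalDegree_finsetSum_le fun d hd => ?_
  rw [bind₁_monomial]
  refine (totalDegree_mul _ _).trans ?_
  rw [totalDegree_C, zero_add]
  calc (∏ i ∈ d.support, g i ^ d i).totalDegree
      ≤ ∑ i ∈ d.support, (g i ^ d i).totalDegree := totalDegree_finsetProd _ _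
    _ ≤ ∑ i ∈ d.support, k * d i := Finset.sum_le_sum fun i _ =>
        (totalDegree_pow _ _).trans (by rw [mul_comm k]; exact Nat.mul_le_mul_left _ (hg i))
    _ = k * d.sum (fun _ e => e) := (Finset.mul_sum _ _ _).symm
    _ ≤ k * p.totalDegree := Nat.mul_le_mul_left _ (le_totalDegree hd)

end MvPolynomial

theorem MeasureTheory.MeasurePreserving.map_coe_toSphere {E : Type*}
    [NormedAddCommGroup E] [NormedSpace ℝ E] [MeasurableSpace E] [BorelSpace E]
    {μ : Measure E} {L : E ≃ₗᵢ[ℝ] E} (hL : MeasurePreserving L μ μ) :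
    MeasurePreserving L (μ.toSphere.map (↑)) (μ.toSphere.map (↑)) := by
  have hLm : Measurable L := L.continuous.measurable
  refine ⟨hLm, ?_⟩
  ext A hA
  have hLA : MeasurableSet (L ⁻¹' A) := hLm hA
  rw [Measure.map_apply hLm hA, Measure.map_apply measurable_subtype_coe hLA,
    Measure.map_apply measurable_subtype_coe hA,
    μ.toSphere_apply' (measurable_subtype_coe hLA), μ.toSphere_apply' (measurable_subtype_coe hA),
    Subtype.image_preimage_coe, Subtype.image_preimage_coe]
  have hset : Set.Ioo (0 : ℝ) 1 • (sphere 0 1 ∩ L ⁻¹' A) =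
      L ⁻¹' (Set.Ioo (0 : ℝ) 1 • (sphere 0 1 ∩ A)) := by
    ext x
    simp only [Set.mem_preimage, Set.mem_smul, Set.mem_inter_iff, mem_sphere_zero_iff_norm]
    constructor
    · rintro ⟨r, hr, y, ⟨hy1, hyA⟩, rfl⟩
      exact ⟨r, hr, L y, ⟨by simpa using hy1, hyA⟩, by simp⟩
    · rintro ⟨r, hr, y, ⟨hy1, hyA⟩, hx⟩
      refine ⟨r, hr, L.symm y, ⟨by simpa using hy1, by simpa using hyA⟩, ?_⟩
      rw [← map_smul, hx, LinearIsometryEquiv.symm_apply_apply]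
  rw [hset, hL.measure_preimage_emb L.toHomeomorph.measurableEmbedding]

instance : IsFiniteMeasure μS1 := by
  unfold μS1; infer_instance

instance : NeZero μS1 :=
  ⟨(Measure.map_ne_zero_iff measurable_subtype_coe.aemeasurable).2 (Measure.toSphere_ne_zero _)⟩

instance : IsProbabilityMeasure (mnormalize μS1) := by
  unfold mnormalize; infer_instance

theorem ae_norm_eq_one_mnormalize_μS1 : ∀ᵐ z ∂(mnormalize μS1), ‖z‖ = 1 := by
  refine Measure.ae_smul_measure ?_ _
  have hsphere : MeasurableSet (Set.range ((↑) : sphere (0 : ℂ) 1 → ℂ)) := by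
    rw [Subtype.range_coe]; exact isClosed_sphere.measurableSet
  filter_upwards [ae_map_mem_range _ hsphere _] with z ⟨w, hw⟩
  rw [← hw, ← mem_sphere_zero_iff_norm]
  exact w.2

theorem map_mul_left_mnormalize_μS1 {w : ℂ} (hw : ‖w‖ = 1) :
    (mnormalize μS1).map (w * ·) = mnormalize μS1 := by
  let c : Circle := ⟨w, by simpa [Submonoid.unitSphere] using hw⟩
  have hrot : MeasurePreserving (rotation c) := (rotation c).measurePreserving
  rw [mnormalize, Measure.map_smul, μS1]
  exact congrArg _ hrot.map_coe_toSphere.map_eq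

theorem integrable_mnormalize_μS1 {E : Type*} [NormedAddCommGroup E] {f : ℂ → E}
    (hf : Continuous f) : Integrable f (mnormalize μS1) := by
  have hsphere : ∀ᵐ z ∂(mnormalize μS1), z ∈ sphere (0 : ℂ) 1 := by
    filter_upwards [ae_norm_eq_one_mnormalize_μS1] with z hz
    exact mem_sphere_zero_iff_norm.2 hz
  rw [← Measure.restrict_eq_self_of_ae_mem hsphere]
  exact hf.continuousOn.integrableOn_compact (isCompact_sphere 0 1)

theorem integral_pow_mul_conj_pow_mnormalize_μS1 (i j : ℕ) :
    ∫ z, z ^ i * conj z ^ j ∂(mnormalize μS1) = if i = j then 1 else 0 := by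
  split_ifs with hij
  · subst hij
    rw [integral_congr_ae (g := fun _ => (1 : ℂ)), integral_const, probReal_univ, one_smul]
    filter_upwards [ae_norm_eq_one_mnormalize_μS1] with z hz
    rw [← mul_pow, mul_conj', hz, Complex.ofReal_one, one_pow, one_pow]
  -- rotating by `w = exp(π i / (i - j))` multiplies the integrand by `w^i w̄^j = -1`
  have hij' : (i : ℂ) - j ≠ 0 := sub_ne_zero.2 (Nat.cast_injective.ne hij)
  set w : ℂ := exp ((Real.pi / (i - j) : ℝ) * I)
  have hw1 : ‖w‖ = 1 := norm_exp_ofReal_mul_I _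
  have hw : w ^ i * conj w ^ j = -1 := by
    rw [← exp_conj, ← exp_nat_mul, ← exp_nat_mul, ← exp_add, ← exp_pi_mul_I]
    congr 1
    simp only [map_mul, conj_ofReal, conj_I]
    push_cast
    field_simp
    ring
  have hJ : ∫ z, z ^ i * conj z ^ j ∂(mnormalize μS1) =
      -∫ z, z ^ i * conj z ^ j ∂(mnormalize μS1) := by
    calc _ = ∫ z, (w * z) ^ i * conj (w * z) ^ j ∂(mnormalize μS1) := by
          conv_lhs => rw [← map_mul_left_mnormalize_μS1 hw1]
          exact integral_map (by fun_prop) (by fun_prop : Continuous _).aestronglyMeasurable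
      _ = ∫ z, (w ^ i * conj w ^ j) * (z ^ i * conj z ^ j) ∂(mnormalize μS1) := by
          simp only [map_mul, mul_pow, mul_mul_mul_comm]
      _ = _ := by rw [integral_const_mul, hw, neg_one_mul]
  linear_combination hJ / 2

theorem continuous_hopf : Continuous hopf := by
  unfold hopf; fun_prop

theorem hopf_act (x : ℂ × ℂ) {z : ℂ} (hz : ‖z‖ = 1) : hopf (act x z) = hopf x := by
  have hzz : z * conj z = 1 := by rw [mul_conj', hz]; norm_num
  simp only [hopf, act, norm_mul, RCLike.norm_conj, hz, mul_one, Prod.mk.injEq, true_and]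
  linear_combination 2 * x.1 * x.2 * hzz

theorem measurable_act (x : ℂ × ℂ) : Measurable (act x) := by
  unfold act; fun_prop

instance (x : ℂ × ℂ) : IsProbabilityMeasure (μfiber x) :=
  Measure.isProbabilityMeasure_map (measurable_act x).aemeasurable

theorem integral_μfiber {E : Type*} [NormedAddCommGroup E] [NormedSpace ℝ E]
    {f : ℂ × ℂ → E} (hf : Continuous f) (x : ℂ × ℂ) :
    ∫ w, f w ∂μfiber x = ∫ z, f (act x z) ∂(mnormalize μS1) :=
  integral_map (measurable_act x).aemeasurable hf.aestronglyMeasurable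

theorem ae_μfiber_hopf_eq (x : ℂ × ℂ) : ∀ᵐ w ∂μfiber x, hopf w = hopf x := by
  refine (ae_map_iff (measurable_act x).aemeasurable
    (continuous_hopf.measurable (measurableSet_singleton (hopf x)))).2 ?_
  filter_upwards [ae_norm_eq_one_mnormalize_μS1] with z hz
  exact hopf_act x hz

theorem integral_μfiber_comp_hopf {E : Type*} [NormedAddCommGroup E] [NormedSpace ℝ E]
    [CompleteSpace E] (f : ℝ × ℂ → E) (x : ℂ × ℂ) :
    ∫ w, f (hopf w) ∂μfiber x = f (hopf x) := by
  rw [integral_congr_ae ((ae_μfiber_hopf_eq x).mono fun w hw => congrArg f hw), integral_const,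
    probReal_univ, one_smul]

def conjCoords (x : ℂ × ℂ) : Fin 4 → ℂ := ![x.1, conj x.1, x.2, conj x.2]

def reImPoly : Fin 4 → MvPolynomial (Fin 4) ℂ :=
  ![C 2⁻¹ * (X 0 + X 1), C (I / 2) * (X 1 - X 0),
    C 2⁻¹ * (X 2 + X 3), C (I / 2) * (X 3 - X 2)]

theorem isHomogeneous_reImPoly (i : Fin 4) : (reImPoly i).IsHomogeneous 1 := by
  fin_cases i <;> simp only [reImPoly, Fin.zero_eta, Fin.mk_one, Fin.reduceFinMk, Matrix.cons_val]
  · exact ((isHomogeneous_X _ _).add (isHomogeneous_X _ _)).C_mul _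
  · exact ((isHomogeneous_X _ _).sub (isHomogeneous_X _ _)).C_mul _
  · exact ((isHomogeneous_X _ _).add (isHomogeneous_X _ _)).C_mul _
  · exact ((isHomogeneous_X _ _).sub (isHomogeneous_X _ _)).C_mul _

theorem eval_conjCoords_reImPoly (x : ℂ × ℂ) (i : Fin 4) :
    eval (conjCoords x) (reImPoly i) = coords4 x i := by
  fin_cases i <;>
    simp [reImPoly, conjCoords, coords4, Complex.ext_iff] <;> ring_nf

theorem polyFun4_eq_eval_conjCoords (p : MvPolynomial (Fin 4) ℂ) (x : ℂ × ℂ) :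
    polyFun4 p x = eval (conjCoords x) (bind₁ reImPoly p) := by
  simp only [polyFun4, eval_bind₁, eval_conjCoords_reImPoly]

theorem continuous_polyFun4 (p : MvPolynomial (Fin 4) ℂ) : Continuous (polyFun4 p) := by
  refine (continuous_eval p).comp (continuous_pi fun i => ?_)
  fin_cases i <;> simp only [coords4] <;> fun_prop

def hopfPoly : Fin 3 → MvPolynomial (Fin 4) ℂ :=
  ![X 0 ^ 2 + X 1 ^ 2 - X 2 ^ 2 - X 3 ^ 2, C 2 * (X 0 * X 2 - X 1 * X 3),
    C 2 * (X 0 * X 3 + X 1 * X 2)]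

theorem isHomogeneous_hopfPoly (i : Fin 3) : (hopfPoly i).IsHomogeneous 2 := by
  fin_cases i <;> simp only [hopfPoly, Fin.zero_eta, Fin.mk_one, Fin.reduceFinMk, Matrix.cons_val]
  · exact (((isHomogeneous_X_pow _ _).add (isHomogeneous_X_pow _ _)).sub
      (isHomogeneous_X_pow _ _)).sub (isHomogeneous_X_pow _ _)
  · exact (((isHomogeneous_X _ _).mul (isHomogeneous_X _ _)).sub
      ((isHomogeneous_X _ _).mul (isHomogeneous_X _ _))).C_mul _
  · exact (((isHomogeneous_X _ _).mul (isHomogeneous_X _ _)).add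
      ((isHomogeneous_X _ _).mul (isHomogeneous_X _ _))).C_mul _

theorem polyFun4_bind₁_hopfPoly (q : MvPolynomial (Fin 3) ℂ) (x : ℂ × ℂ) :
    polyFun4 (bind₁ hopfPoly q) x = polyFun3 q (hopf x) := by
  simp only [polyFun4, polyFun3, eval_bind₁]
  congr 2 with i
  fin_cases i <;>
    simp [hopfPoly, coords4, coords3, hopf, ← ofReal_pow, Complex.sq_norm, normSq_apply] <;>
    push_cast <;> ring

theorem prod_conjCoords_act_pow (d : Fin 4 →₀ ℕ) (x : ℂ × ℂ) (z : ℂ) :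
    ∏ i, conjCoords (act x z) i ^ d i =
      (∏ i, conjCoords x i ^ d i) * (z ^ (d 0 + d 3) * conj z ^ (d 1 + d 2)) := by
  simp only [Fin.prod_univ_four, conjCoords, act, map_mul, Complex.conj_conj,
    Matrix.cons_val_zero, Matrix.cons_val_one, Matrix.cons_val_two, Matrix.cons_val_three,
    Matrix.head_cons, Matrix.tail_cons, mul_pow, pow_add]
  ring

theorem integral_eval_conjCoords_act (P : MvPolynomial (Fin 4) ℂ) (x : ℂ × ℂ) :
    ∫ z, eval (conjCoords (act x z)) P ∂(mnormalize μS1) =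
      ∑ d ∈ P.support with d 0 + d 3 = d 1 + d 2, coeff d P * ∏ i, conjCoords x i ^ d i := by
  simp only [eval_eq', prod_conjCoords_act_pow, ← mul_assoc (coeff _ P)]
  have hintegrable (i j : ℕ) : Integrable (fun z : ℂ => z ^ i * conj z ^ j) (mnormalize μS1) :=
    integrable_mnormalize_μS1 (by fun_prop)
  rw [integral_finsetSum _ fun d _ => (hintegrable _ _).const_mul _, Finset.sum_filter]
  refine Finset.sum_congr rfl fun d _ => ?_
  rw [integral_const_mul, integral_pow_mul_conj_pow_mnormalize_μS1, mul_ite, mul_one, mul_zero]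

def IsHopfPoly (m : ℕ) (f : ℂ × ℂ → ℂ) : Prop :=
  ∃ q : MvPolynomial (Fin 3) ℂ, q.totalDegree ≤ m ∧ ∀ x ∈ S3, f x = polyFun3 q (hopf x)

namespace IsHopfPoly

variable {m n : ℕ} {f g : ℂ × ℂ → ℂ}

theorem mono (hf : IsHopfPoly m f) (hmn : m ≤ n) : IsHopfPoly n f :=
  let ⟨q, hq, hfq⟩ := hf
  ⟨q, hq.trans hmn, hfq⟩

theorem congr (hf : IsHopfPoly m f) (hfg : ∀ x ∈ S3, f x = g x) : IsHopfPoly m g :=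
  let ⟨q, hq, hfq⟩ := hf
  ⟨q, hq, fun x hx => (hfg x hx).symm.trans (hfq x hx)⟩

theorem const (m : ℕ) (c : ℂ) : IsHopfPoly m fun _ => c :=
  ⟨C c, by simp, fun x _ => by simp [polyFun3]⟩

theorem add (hf : IsHopfPoly m f) (hg : IsHopfPoly m g) : IsHopfPoly m fun x => f x + g x :=
  let ⟨p, hp, hfp⟩ := hf
  let ⟨q, hq, hgq⟩ := hg
  ⟨p + q, (totalDegree_add p q).trans (max_le hp hq), fun x hx => by
    simp [polyFun3, hfp x hx, hgq x hx]⟩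

theorem mul (hf : IsHopfPoly m f) (hg : IsHopfPoly n g) :
    IsHopfPoly (m + n) fun x => f x * g x :=
  let ⟨p, hp, hfp⟩ := hf
  let ⟨q, hq, hgq⟩ := hg
  ⟨p * q, (totalDegree_mul p q).trans (add_le_add hp hq), fun x hx => by
    simp [polyFun3, hfp x hx, hgq x hx]⟩

theorem const_mul (hf : IsHopfPoly m f) (c : ℂ) : IsHopfPoly m fun x => c * f x :=
  ((const 0 c).mul hf).mono (by omega)

theorem pow (hf : IsHopfPoly m f) (n : ℕ) : IsHopfPoly (n * m) fun x => f x ^ n := by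
  induction n with
  | zero => simpa using const 0 1
  | succ n ih => simpa [pow_succ, add_mul] using ih.mul hf

theorem sum {ι : Type*} (s : Finset ι) {f : ι → ℂ × ℂ → ℂ}
    (hf : ∀ i ∈ s, IsHopfPoly m (f i)) :
    IsHopfPoly m fun x => ∑ i ∈ s, f i x := by
  classical
  induction s using Finset.induction_on with
  | empty => simpa using const m 0
  | insert i s hi ih =>
    simp_rw [Finset.sum_insert hi]
    exact (hf i (s.mem_insert_self i)).add (ih fun j hj => hf j (Finset.mem_insert_of_mem hj))

end IsHopfPoly

theorem isHopfPoly_coords3_hopf (i : Fin 3) : IsHopfPoly 1 fun x => (coords3 (hopf x) i : ℂ) :=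
  ⟨X i, (totalDegree_X i).le, fun x _ => by simp [polyFun3]⟩

theorem ofReal_norm_sq_add_norm_sq_of_mem_S3 {x : ℂ × ℂ} (hx : x ∈ S3) :
    (‖x.1‖ : ℂ) ^ 2 + (‖x.2‖ : ℂ) ^ 2 = 1 := by
  exact_mod_cast hx

theorem isHopfPoly_fst_mul_conj : IsHopfPoly 1 fun x => x.1 * conj x.1 :=
  ((IsHopfPoly.const 1 2⁻¹).add ((isHopfPoly_coords3_hopf 0).const_mul 2⁻¹)).congr
    fun x hx => by
      simp only [mul_conj', coords3, hopf, Matrix.cons_val_zero]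
      push_cast
      linear_combination (-2⁻¹ : ℂ) * ofReal_norm_sq_add_norm_sq_of_mem_S3 hx

theorem isHopfPoly_snd_mul_conj : IsHopfPoly 1 fun x => x.2 * conj x.2 :=
  ((IsHopfPoly.const 1 2⁻¹).add ((isHopfPoly_coords3_hopf 0).const_mul (-2⁻¹))).congr
    fun x hx => by
      simp only [mul_conj', coords3, hopf, Matrix.cons_val_zero]
      push_cast
      linear_combination (-2⁻¹ : ℂ) * ofReal_norm_sq_add_norm_sq_of_mem_S3 hx

theorem isHopfPoly_fst_mul_snd : IsHopfPoly 1 fun x => x.1 * x.2 :=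
  (((isHopfPoly_coords3_hopf 1).add ((isHopfPoly_coords3_hopf 2).const_mul I)).const_mul
    2⁻¹).congr fun x _ => by
      apply Complex.ext <;> simp [coords3, hopf] <;> ring

theorem isHopfPoly_conj_fst_mul_conj_snd : IsHopfPoly 1 fun x => conj x.1 * conj x.2 :=
  (((isHopfPoly_coords3_hopf 1).add ((isHopfPoly_coords3_hopf 2).const_mul (-I))).const_mul
    2⁻¹).congr fun x _ => by
      apply Complex.ext <;> simp [coords3, hopf] <;> ring

theorem isHopfPoly_prod_conjCoords_pow {d : Fin 4 →₀ ℕ} (hd : d 0 + d 3 = d 1 + d 2) :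
    IsHopfPoly ((∑ i, d i) / 2) fun x => ∏ i, conjCoords x i ^ d i := by
  simp only [Fin.sum_univ_four, Fin.prod_univ_four, conjCoords, Matrix.cons_val_zero,
    Matrix.cons_val_one, Matrix.cons_val_two, Matrix.cons_val_three, Matrix.head_cons,
    Matrix.tail_cons]
  rcases le_total (d 1) (d 0) with h | h
  · obtain ⟨n, hn⟩ := Nat.exists_eq_add_of_le h
    have hn' : d 2 = d 3 + n := by omega
    refine ((((isHopfPoly_fst_mul_conj.pow (d 1)).mul (isHopfPoly_snd_mul_conj.pow (d 3))).mul
      (isHopfPoly_fst_mul_snd.pow n)).mono (by omega)).congr fun x _ => ?_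
    rw [hn, hn']
    ring
  · obtain ⟨n, hn⟩ := Nat.exists_eq_add_of_le h
    have hn' : d 3 = d 2 + n := by omega
    refine ((((isHopfPoly_fst_mul_conj.pow (d 0)).mul (isHopfPoly_snd_mul_conj.pow (d 2))).mul
      (isHopfPoly_conj_fst_mul_conj_snd.pow n)).mono (by omega)).congr fun x _ => ?_
    rw [hn, hn']
    ring

theorem isHopfPoly_integral_μfiber_polyFun4 {t : ℕ} {p : MvPolynomial (Fin 4) ℂ}
    (hp : p.totalDegree ≤ t) : IsHopfPoly (t / 2) fun x => ∫ w, polyFun4 p w ∂μfiber x := by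
  set P := bind₁ reImPoly p
  have hP : P.totalDegree ≤ t :=
    ((totalDegree_bind₁_le (fun i => (isHomogeneous_reImPoly i).totalDegree_le) p).trans_eq
      (one_mul _)).trans hp
  have hfiber (x : ℂ × ℂ) : ∫ w, polyFun4 p w ∂μfiber x =
      ∑ d ∈ P.support with d 0 + d 3 = d 1 + d 2, coeff d P * ∏ i, conjCoords x i ^ d i := by
    rw [integral_μfiber (continuous_polyFun4 p)]
    simp only [polyFun4_eq_eval_conjCoords]
    exact integral_eval_conjCoords_act P x
  simp only [hfiber]
  refine IsHopfPoly.sum _ fun d hd => ?_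
  obtain ⟨hdP, hd⟩ := Finset.mem_filter.1 hd
  have hdeg : ∑ i, d i ≤ t := by
    simpa [Finsupp.sum_fintype] using (le_totalDegree hdP).trans hP
  exact ((isHopfPoly_prod_conjCoords_pow hd).const_mul _).mono (Nat.div_le_div_right hdeg)

theorem integral_μfiber_polyFun4_bind₁_hopfPoly (q : MvPolynomial (Fin 3) ℂ) (x : ℂ × ℂ) :
    ∫ w, polyFun4 (bind₁ hopfPoly q) w ∂μfiber x = polyFun3 q (hopf x) := by
  simp only [polyFun4_bind₁_hopfPoly, integral_μfiber_comp_hopf]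

/-- Fiber integration along the Hopf map maps `P_t(S³)` onto
`P_{⌊t/2⌋}(S²)`: `I_π(P_t(S³)) = P_{⌊t/2⌋}(S²)`. -/
theorem fiber_integration_image (t : ℕ)
    (s : (ℝ × ℂ) → ℂ × ℂ) (hs : ∀ y ∈ S2, s y ∈ S3 ∧ hopf (s y) = y) :
    {g : ↥S2 → ℂ | ∃ p : MvPolynomial (Fin 4) ℂ, p.totalDegree ≤ t ∧
        ∀ y : ↥S2, g y = ∫ x, polyFun4 p x ∂(μfiber (s y.1))} =
    {g : ↥S2 → ℂ | ∃ q : MvPolynomial (Fin 3) ℂ, q.totalDegree ≤ t / 2 ∧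
        ∀ y : ↥S2, g y = polyFun3 q y.1} := by
  ext g
  constructor
  · rintro ⟨p, hp, hg⟩
    obtain ⟨q, hq, hpq⟩ := isHopfPoly_integral_μfiber_polyFun4 hp
    refine ⟨q, hq, fun y => ?_⟩
    obtain ⟨hsy, hopf_sy⟩ := hs y.1 y.2
    rw [hg, ← congrArg (polyFun3 q) hopf_sy]
    exact hpq _ hsy
  · rintro ⟨q, hq, hg⟩
    refine ⟨bind₁ hopfPoly q, ?_, fun y => ?_⟩
    · calc (bind₁ hopfPoly q).totalDegree ≤ 2 * q.totalDegree :=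
            totalDegree_bind₁_le (fun i => (isHomogeneous_hopfPoly i).totalDegree_le) q
        _ ≤ t := by omega
    · rw [hg, integral_μfiber_polyFun4_bind₁_hopfPoly, (hs y.1 y.2).2]
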